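/- arXiv:2602.11892 — 2 statements merged into one kernel-verified Lean document; each statement's English description precedes it below -/
import Mathlib

section
/- Let D be a Bernstein orientation of a graph G (i.e., an orientation with no directed cycle and no alternating closed trail), and let (R,B) be any partition of the arcs of D into two colour classes. Then the configuration (R,B) is recoverable: there is no other partition (R',B') of an orientation of G with the same degree function. -/
variable {α : Type*}

/-- An oriented graph: a finite set of arcs with no loops and at most one
arc between any pair of vertices. -/
def Oriented (D : Finset (α × α)) : Prop :=
  ∀ a ∈ D, a.1 ≠ a.2 ∧ (a.2, a.1) ∉ D

/-- Out-degree of a vertex in a finite digraph. -/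
def outDeg [DecidableEq α] (D : Finset (α × α)) (v : α) : ℕ :=
  (D.filter fun a => a.1 = v).card

/-- In-degree of a vertex in a finite digraph. -/
def inDeg [DecidableEq α] (D : Finset (α × α)) (v : α) : ℕ :=
  (D.filter fun a => a.2 = v).card

/-- A digraph has a directed cycle iff some vertex reaches itself by a
nonempty directed walk. -/
def HasDirCycle (D : Finset (α × α)) : Prop :=
  ∃ v : α, Relation.TransGen (fun a b => (a, b) ∈ D) v v

/-- Two arcs have the same direction with respect to a shared vertex `v`:
both leave `v` or both enter `v`. -/
def SameDir (e f : α × α) (v : α) : Prop :=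
  (e.1 = v ∧ f.1 = v) ∨ (e.2 = v ∧ f.2 = v)

/-- An alternating closed trail: a cyclic sequence of `2m` distinct arcs
`e 0, e 1, …` (indices mod `2m`) such that consecutive arcs share a vertex
`v i` at which they have the same direction, with `v i ≠ v (i+1)`. -/
def HasAltTrail (D : Finset (α × α)) : Prop :=
  ∃ m : ℕ, 0 < m ∧ ∃ (e : ZMod (2 * m) → α × α) (v : ZMod (2 * m) → α),
    Function.Injective e ∧ (∀ i, e i ∈ D) ∧
    (∀ i, SameDir (e i) (e (i + 1)) (v i)) ∧ (∀ i, v i ≠ v (i + 1))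

/-- A Bernstein oriented graph: no directed cycles and no alternating
closed trails. -/
def Bernstein (D : Finset (α × α)) : Prop :=
  Oriented D ∧ ¬ HasDirCycle D ∧ ¬ HasAltTrail D

/-- `D` is an orientation of the simple graph `G`: every arc of `D` is an
edge of `G`, and every edge of `G` carries exactly one of the two possible
arcs. -/
def IsOrientation (G : SimpleGraph α) (D : Finset (α × α)) : Prop :=
  (∀ a ∈ D, G.Adj a.1 a.2) ∧ ∀ x y : α, G.Adj x y → ((x, y) ∈ D ↔ (y, x) ∉ D)

/-!
If `D'` has the same out-degrees as `D`, the arcs of `D` that `D'` reverses form a digraph with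
in-degree equal to out-degree everywhere; if nonempty it contains a directed cycle, so `D' = D`.
Then `R \ R'` and `R' \ R` have equal in- and out-degrees at every vertex. Matching their arcs
bijectively at common heads and at common tails, and following the two matchings alternately,
closes up into an alternating closed trail. Hence `R' = R`, and `B' = B` as the complement.
-/

open Finset Function

theorem Relation.transGen_iterate {β : Type*} {r : β → β → Prop} {f : β → β}
    (hf : ∀ x, r x (f x)) (x : β) {n : ℕ} (hn : 0 < n) : Relation.TransGen r x (f^[n] x) := by
  induction n, hn using Nat.le_induction with
  | base => exact .single (hf x)
  | succ n _ ih => exact ih.tail (iterate_succ_apply' f n x ▸ hf _)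

theorem Function.Periodic.map_nat_mod {β : Type*} {f : ℕ → β} {c : ℕ} (h : Periodic f c)
    (n : ℕ) : f (n % c) = f n := by
  conv_rhs => rw [← Nat.mod_add_div n c, mul_comm]
  exact (h.nat_mul _ _).symm

theorem Finset.exists_equiv_comp_eq {β γ : Type*} [DecidableEq γ] {s t : Finset β} (f : β → γ)
    (h : ∀ c, #(s.filter (f · = c)) = #(t.filter (f · = c))) :
    ∃ e : s ≃ t, ∀ a, f (e a) = f a := by
  have hcard : ∀ (u : Finset β) c, Fintype.card {a : u // f a = c} = #(u.filter (f · = c)) := by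
    intro u c
    rw [Fintype.card_subtype, ← card_map (Embedding.subtype _)]
    congr 1
    ext
    simp [and_comm]
  let e : ∀ c, {a : s // f a = c} ≃ {b : t // f b = c} := fun c =>
    Fintype.equivOfCardEq (by rw [hcard, hcard, h])
  exact ⟨Equiv.ofFiberEquiv e, Equiv.ofFiberEquiv_map e⟩

section Degrees

variable [DecidableEq α]

theorem outDeg_union {s t : Finset (α × α)} (h : Disjoint s t) (v : α) :
    outDeg (s ∪ t) v = outDeg s v + outDeg t v := by
  rw [outDeg, filter_union, card_union_of_disjoint (disjoint_filter_filter h)]; rfl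

theorem inDeg_union {s t : Finset (α × α)} (h : Disjoint s t) (v : α) :
    inDeg (s ∪ t) v = inDeg s v + inDeg t v := by
  rw [inDeg, filter_union, card_union_of_disjoint (disjoint_filter_filter h)]; rfl

theorem outDeg_sdiff_add_inter (s t : Finset (α × α)) (v : α) :
    outDeg (s \ t) v + outDeg (s ∩ t) v = outDeg s v := by
  rw [← outDeg_union (disjoint_sdiff_inter s t), sdiff_union_inter]

theorem inDeg_sdiff_add_inter (s t : Finset (α × α)) (v : α) :
    inDeg (s \ t) v + inDeg (s ∩ t) v = inDeg s v := by
  rw [← inDeg_union (disjoint_sdiff_inter s t), sdiff_union_inter]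

theorem outDeg_sdiff_eq_of_outDeg_eq {s t : Finset (α × α)} {v : α}
    (h : outDeg s v = outDeg t v) : outDeg (s \ t) v = outDeg (t \ s) v := by
  have hs := outDeg_sdiff_add_inter s t v
  have ht := outDeg_sdiff_add_inter t s v
  rw [inter_comm] at ht
  omega

theorem inDeg_sdiff_eq_of_inDeg_eq {s t : Finset (α × α)} {v : α}
    (h : inDeg s v = inDeg t v) : inDeg (s \ t) v = inDeg (t \ s) v := by
  have hs := inDeg_sdiff_add_inter s t v
  have ht := inDeg_sdiff_add_inter t s v
  rw [inter_comm] at ht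
  omega

theorem outDeg_image_swap (s : Finset (α × α)) (v : α) :
    outDeg (s.image Prod.swap) v = inDeg s v := by
  rw [outDeg, filter_image, card_image_of_injective _ Prod.swap_injective]; rfl

end Degrees

theorem HasDirCycle.mono {S D : Finset (α × α)} (h : S ⊆ D) (hS : HasDirCycle S) :
    HasDirCycle D :=
  let ⟨v, hv⟩ := hS
  ⟨v, Relation.TransGen.mono (fun _ _ hab => h hab) _ _ hv⟩

theorem hasDirCycle_of_forall_exists_next {S : Finset (α × α)} (hS : S.Nonempty)
    (hnext : ∀ a ∈ S, ∃ b ∈ S, b.1 = a.2) : HasDirCycle S := by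
  choose! next hnextS hnext_fst using hnext
  let f : S → S := fun a => ⟨next a, hnextS a a.2⟩
  have hstep : ∀ a : S, (a.1.1, (f a).1.1) ∈ S := fun a => by
    rw [hnext_fst a a.2]
    exact a.2
  have hwalk : ∀ a : S, ∀ {n}, 0 < n →
      Relation.TransGen (fun x y => (x, y) ∈ S) a.1.1 (f^[n] a).1.1 := fun a _ hn =>
    Relation.TransGen.lift (r := fun a b : S => (a.1.1, b.1.1) ∈ S) (fun a : S => a.1.1)
      (fun _ _ h => h) _ _ (Relation.transGen_iterate hstep a hn)
  obtain ⟨a₀, ha₀⟩ := hS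
  obtain ⟨i, j, hij, heq⟩ := Finite.exists_ne_map_eq_of_infinite fun n => f^[n] ⟨a₀, ha₀⟩
  wlog hlt : i < j generalizing i j
  · exact this j i hij.symm heq.symm (hij.symm.lt_of_le (not_lt.1 hlt))
  refine ⟨(f^[i] ⟨a₀, ha₀⟩).1.1, ?_⟩
  have hcycle := hwalk (f^[i] ⟨a₀, ha₀⟩) (Nat.sub_pos_of_lt hlt)
  rwa [← iterate_add_apply, Nat.sub_add_cancel hlt.le, ← heq] at hcycle

section Cycles

variable [DecidableEq α]

theorem hasDirCycle_of_outDeg_eq_inDeg {S : Finset (α × α)} (hS : S.Nonempty)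
    (hbal : ∀ v, outDeg S v = inDeg S v) : HasDirCycle S := by
  refine hasDirCycle_of_forall_exists_next hS fun a ha => ?_
  have hin : 0 < inDeg S a.2 := card_pos.2 ⟨a, mem_filter.2 ⟨ha, rfl⟩⟩
  rw [← hbal] at hin
  obtain ⟨b, hb⟩ := card_pos.1 hin
  exact ⟨b, (mem_filter.1 hb).1, (mem_filter.1 hb).2⟩

theorem IsOrientation.sdiff_eq_image_swap {G : SimpleGraph α} {D D' : Finset (α × α)}
    (hD : IsOrientation G D) (hD' : IsOrientation G D') :
    D' \ D = (D \ D').image Prod.swap := by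
  ext ⟨x, y⟩
  simp only [mem_sdiff, mem_image, Prod.exists, Prod.swap_prod_mk, Prod.mk.injEq]
  constructor
  · rintro ⟨hxy, hxyD⟩
    have hadj := hD'.1 _ hxy
    exact ⟨y, x, ⟨not_not.1 (mt (hD.2 x y hadj).2 hxyD),
      fun h => (hD'.2 x y hadj).1 hxy h⟩, rfl, rfl⟩
  · rintro ⟨y, x, ⟨hyx, hyxD'⟩, rfl, rfl⟩
    have hadj := hD.1 _ hyx
    exact ⟨not_not.1 (mt (hD'.2 y x hadj).2 hyxD'), fun h => (hD.2 y x hadj).1 hyx h⟩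

theorem IsOrientation.eq_of_outDeg_eq {G : SimpleGraph α} {D D' : Finset (α × α)}
    (hD : IsOrientation G D) (hD' : IsOrientation G D') (hacyc : ¬ HasDirCycle D)
    (hdeg : ∀ v, outDeg D' v = outDeg D v) : D' = D := by
  have hswap := hD.sdiff_eq_image_swap hD'
  have hbal : ∀ v, outDeg (D \ D') v = inDeg (D \ D') v := fun v => by
    rw [← outDeg_image_swap, ← hswap]
    exact outDeg_sdiff_eq_of_outDeg_eq (hdeg v).symm
  have hDD' : D \ D' = ∅ := not_nonempty_iff_eq_empty.1 fun hne =>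
    hacyc ((hasDirCycle_of_outDeg_eq_inDeg hne hbal).mono sdiff_subset)
  have hD'D : D' \ D = ∅ := by rw [hswap, hDD', image_empty]
  exact (sdiff_eq_empty_iff_subset.1 hD'D).antisymm (sdiff_eq_empty_iff_subset.1 hDD')

end Cycles

theorem HasAltTrail.mono {S D : Finset (α × α)} (h : S ⊆ D) (hS : HasAltTrail S) :
    HasAltTrail D :=
  let ⟨m, hm, e, v, hinj, hmem, hdir, hne⟩ := hS
  ⟨m, hm, e, v, hinj, fun i => h (hmem i), hdir, hne⟩

theorem hasAltTrail_of_periodic {D : Finset (α × α)} {m : ℕ} (hm : 0 < m)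
    {e : ℕ → α × α} {v : ℕ → α} (he : Periodic e (2 * m)) (hv : Periodic v (2 * m))
    (hinj : Set.InjOn e (Set.Iio (2 * m))) (hmem : ∀ k, e k ∈ D)
    (hdir : ∀ k, SameDir (e k) (e (k + 1)) (v k)) (hne : ∀ k, v k ≠ v (k + 1)) :
    HasAltTrail D := by
  have : NeZero (2 * m) := ⟨by omega⟩
  have hsucc : ∀ i : ZMod (2 * m), (i + 1).val = (i.val + 1) % (2 * m) := fun i => by
    rw [ZMod.val_add, ZMod.val_one_eq_one_mod, Nat.add_mod_mod]
  refine ⟨m, hm, fun i => e i.val, fun i => v i.val,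
    fun i j h => ZMod.val_injective _ (hinj (ZMod.val_lt i) (ZMod.val_lt j) h),
    fun i => hmem _, fun i => ?_, fun i => ?_⟩
  · simpa only [hsucc, he.map_nat_mod, hv.map_nat_mod] using hdir i.val
  · simpa only [hsucc, hv.map_nat_mod] using hne i.val

section AltTrails

variable [DecidableEq α]

theorem hasAltTrail_of_interleave {P Q : Finset (α × α)} (hPQ : Disjoint P Q) {m : ℕ} (hm : 0 < m)
    {p q : ℕ → α × α} (hp_per : Periodic p m) (hq_per : Periodic q m)
    (hp_inj : Set.InjOn p (Set.Iio m)) (hq_inj : Set.InjOn q (Set.Iio m))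
    (hp : ∀ j, p j ∈ P) (hq : ∀ j, q j ∈ Q)
    (hhead : ∀ j, (q j).2 = (p j).2) (htail : ∀ j, (p (j + 1)).1 = (q j).1)
    (hp_loop : ∀ j, (p j).1 ≠ (p j).2) (hq_loop : ∀ j, (q j).1 ≠ (q j).2) :
    HasAltTrail (P ∪ Q) := by
  let e : ℕ → α × α := fun k => if Even k then p (k / 2) else q (k / 2)
  let v : ℕ → α := fun k => if Even k then (e k).2 else (e k).1
  have he_even : ∀ j, e (2 * j) = p j := fun j => by simp [e]
  have he_odd : ∀ j, e (2 * j + 1) = q j := fun j => by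
    simp [e, Nat.add_div_of_dvd_right (dvd_mul_right 2 j)]
  have hv_even : ∀ j, v (2 * j) = (p j).2 := fun j => by simp [v, he_even]
  have hv_odd : ∀ j, v (2 * j + 1) = (q j).1 := fun j => by simp [v, he_odd]
  have he_per : Periodic e (2 * m) := fun k => by
    obtain ⟨j, rfl | rfl⟩ := Nat.even_or_odd' k
    · rw [← mul_add, he_even, he_even, hp_per]
    · rw [add_right_comm, ← mul_add, he_odd, he_odd, hq_per]
  have hv_per : Periodic v (2 * m) := fun k => by
    simp [v, he_per k, Nat.even_add]
  refine hasAltTrail_of_periodic (v := v) hm he_per hv_per ?_ ?_ ?_ ?_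
  · intro k hk l hl hkl
    simp only [Set.mem_Iio] at hk hl
    obtain ⟨i, rfl | rfl⟩ := Nat.even_or_odd' k <;> obtain ⟨j, rfl | rfl⟩ := Nat.even_or_odd' l
    · rw [he_even, he_even] at hkl
      rw [hp_inj (Set.mem_Iio.2 (by omega)) (Set.mem_Iio.2 (by omega)) hkl]
    · rw [he_even, he_odd] at hkl
      exact absurd (hkl ▸ hq j) (disjoint_left.1 hPQ (hp i))
    · rw [he_odd, he_even] at hkl
      exact absurd (hkl ▸ hp j) (disjoint_left.1 hPQ.symm (hq i))
    · rw [he_odd, he_odd] at hkl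
      rw [hq_inj (Set.mem_Iio.2 (by omega)) (Set.mem_Iio.2 (by omega)) hkl]
  · intro k
    obtain ⟨j, rfl | rfl⟩ := Nat.even_or_odd' k
    · exact he_even j ▸ mem_union_left _ (hp j)
    · exact he_odd j ▸ mem_union_right _ (hq j)
  · intro k
    obtain ⟨j, rfl | rfl⟩ := Nat.even_or_odd' k
    · rw [hv_even, he_even, he_odd]
      exact .inr ⟨rfl, hhead j⟩
    · rw [hv_odd, add_assoc, ← mul_add_one, he_even, he_odd]
      exact .inl ⟨rfl, htail j⟩
  · intro k
    obtain ⟨j, rfl | rfl⟩ := Nat.even_or_odd' k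
    · rw [hv_even, hv_odd, ← hhead]
      exact (hq_loop j).symm
    · rw [hv_odd, add_assoc, ← mul_add_one, hv_even, ← htail]
      exact hp_loop _

theorem hasAltTrail_of_balanced {P Q : Finset (α × α)} (hPQ : Disjoint P Q) (hP : P.Nonempty)
    (hloop : ∀ a ∈ P ∪ Q, a.1 ≠ a.2) (hout : ∀ v, outDeg P v = outDeg Q v)
    (hin : ∀ v, inDeg P v = inDeg Q v) : HasAltTrail (P ∪ Q) := by
  obtain ⟨head, hhead⟩ := exists_equiv_comp_eq Prod.snd hin
  obtain ⟨tail, htail⟩ := exists_equiv_comp_eq Prod.fst hout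
  -- `π` goes from a `P`-arc to the `Q`-arc with the same head, then to the `P`-arc with the same
  -- tail as that one; the trail runs along a `π`-orbit, visiting these `Q`-arcs in between
  let π : Equiv.Perm P := head.trans tail.symm
  have hπ : ∀ a, (π a).1.1 = (head a).1.1 := fun a => by
    rw [← htail (π a)]
    simp [π]
  obtain ⟨a₀, ha₀⟩ := hP
  let x : ℕ → P := fun j => π^[j] ⟨a₀, ha₀⟩
  obtain ⟨m, hm_def⟩ : ∃ m, minimalPeriod π ⟨a₀, ha₀⟩ = m := ⟨_, rfl⟩
  have hm : 0 < m := hm_def ▸ minimalPeriod_pos_of_mem_periodicPts (π.injective.mem_periodicPts _)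
  have hx_per : Periodic x m := fun j => by
    simp only [x, iterate_add_apply, ← hm_def, iterate_minimalPeriod]
  have hx_inj : Set.InjOn x (Set.Iio m) := hm_def ▸ iterate_injOn_Iio_minimalPeriod
  refine hasAltTrail_of_interleave (p := fun j => x j) (q := fun j => head (x j)) hPQ hm
    (fun j => by simp only [hx_per j]) (fun j => by simp only [hx_per j])
    (fun i hi j hj h => hx_inj hi hj (Subtype.ext h))
    (fun i hi j hj h => hx_inj hi hj (head.injective (Subtype.ext h)))
    (fun j => (x j).2) (fun j => (head (x j)).2) (fun j => hhead (x j)) (fun j => ?_)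
    (fun j => hloop _ (mem_union_left _ (x j).2))
    (fun j => hloop _ (mem_union_right _ (head (x j)).2))
  simp only [x, iterate_succ_apply', hπ]

theorem eq_of_degrees_eq_of_not_hasAltTrail {D R R' : Finset (α × α)} (hD : ¬ HasAltTrail D)
    (hloop : ∀ a ∈ D, a.1 ≠ a.2) (hR : R ⊆ D) (hR' : R' ⊆ D)
    (hout : ∀ v, outDeg R' v = outDeg R v) (hin : ∀ v, inDeg R' v = inDeg R v) : R' = R := by
  have hsub : ∀ {S T : Finset (α × α)}, S ⊆ D → T ⊆ D → (∀ v, outDeg S v = outDeg T v) →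
      (∀ v, inDeg S v = inDeg T v) → S ⊆ T := by
    intro S T hS hT hout hin
    rw [← sdiff_eq_empty_iff_subset, ← not_nonempty_iff_eq_empty]
    intro hne
    have hST : S \ T ∪ T \ S ⊆ D := union_subset (sdiff_subset.trans hS) (sdiff_subset.trans hT)
    exact hD <| HasAltTrail.mono hST <| hasAltTrail_of_balanced disjoint_sdiff_sdiff hne
      (fun a ha => hloop a (hST ha)) (fun v => outDeg_sdiff_eq_of_outDeg_eq (hout v))
      (fun v => inDeg_sdiff_eq_of_inDeg_eq (hin v))
  exact (hsub hR' hR hout hin).antisymm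
    (hsub hR hR' (fun v => (hout v).symm) (fun v => (hin v).symm))

end AltTrails

/-- Any red/blue colouring of a Bernstein orientation of `G` is recoverable:
no other coloured orientation of `G` has the same degree function. -/
theorem stmt3 [DecidableEq α] (G : SimpleGraph α) (D R B : Finset (α × α))
    (hD : IsOrientation G D) (hBern : Bernstein D)
    (hRB : R ∪ B = D) (hdisj : Disjoint R B) :
    ∀ D' R' B' : Finset (α × α), IsOrientation G D' → R' ∪ B' = D' →
      Disjoint R' B' →
      (∀ v : α, outDeg R' v = outDeg R v ∧ inDeg R' v = inDeg R v ∧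
        outDeg B' v = outDeg B v ∧ inDeg B' v = inDeg B v) →
      R' = R ∧ B' = B := by
  intro D' R' B' hD' hR'B' hdisj' hdeg
  obtain ⟨hori, hacyc, hnotrail⟩ := hBern
  have hD'D : D' = D := hD.eq_of_outDeg_eq hD' hacyc fun v => by
    rw [← hRB, ← hR'B', outDeg_union hdisj, outDeg_union hdisj', (hdeg v).1, (hdeg v).2.2.1]
  have hR'R : R' = R :=
    eq_of_degrees_eq_of_not_hasAltTrail hnotrail (fun a ha => (hori a ha).1)
      (hRB ▸ subset_union_left) (hD'D ▸ hR'B' ▸ subset_union_left)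
      (fun v => (hdeg v).1) (fun v => (hdeg v).2.1)
  refine ⟨hR'R, ?_⟩
  rw [← union_sdiff_cancel_left hdisj', ← union_sdiff_cancel_left hdisj, hR'B', hRB, hD'D, hR'R]
end

section
/- Let G be a circuit in an abstract 2-rigidity matroid with the 0-extension property, and suppose there are vertices u, w and edge-disjoint subgraphs X, Y each with at least 2 edges partitioning the edges of G, with V(X) ∩ V(Y) = {u, w}. Then {u,w} is not an edge of G, and both X + {u,w} and Y + {u,w} are circuits of the matroid. -/
/-! If `Y + uw` were independent, 0-extensions would keep it independent after joining every
vertex of `X` other than `u, w` to both `u` and `w`. This fan together with `uw` has `2|V(X)| - 3`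
edges, so it spans the complete graph on `V(X)`, and with it all of `X`. Then for `f ∈ Y - uw` the
independent set `(Y - f) + uw + fan` spans `G - f`, hence `f`, which is absurd. So `X + uw` and
`Y + uw` are both dependent. Were `uw` an edge of `X`, then `Y + uw` would be a proper subset of `G`
(as `|X| ≥ 2`), hence independent; so `uw ∉ G`. Eliminating `uw` between the circuits contained in
`X + uw` and `Y + uw` leaves a circuit inside `G`, i.e. `G` itself, which forces those circuits to
be all of `X + uw` and `Y + uw`. -/

/-- The vertex set of a graph given as a set of (undirected) edges. -/
def vertsOf {α : Type*} (G : Set (Sym2 α)) : Set α := {v | ∃ e ∈ G, v ∈ e}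

/-- The degree of a vertex in a graph given as a set of edges. -/
noncomputable def edeg {α : Type*} (G : Set (Sym2 α)) (v : α) : ℕ := {e ∈ G | v ∈ e}.ncard

/-- Laman's sparsity condition: every set of at least two vertices spans at
most `2m - 3` edges. This characterizes independence in the generic plane
rigidity matroid. -/
def Laman {n : ℕ} (G : Set (Sym2 (Fin n))) : Prop :=
  ∀ U : Finset (Fin n), 2 ≤ U.card →
    {e ∈ G | ∀ v ∈ e, v ∈ U}.ncard ≤ 2 * U.card - 3

/-- A circuit of a matroid: a dependent set all of whose proper subsets are
independent. -/
def IsCircuitIn {β : Type*} (M : Matroid β) (C : Set β) : Prop :=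
  M.Dep C ∧ ∀ D : Set β, D ⊂ C → M.Indep D

/-- The matroid `M` has rank `k` (every base has `k` elements). -/
def RankEq {β : Type*} (M : Matroid β) (k : ℕ) : Prop :=
  ∀ B : Set β, M.IsBase B → B.ncard = k

/-- The edge set of a copy of `K₄` given by an injection `f : Fin 4 ↪ Fin n`. -/
def K4Copy {n : ℕ} (f : Fin 4 ↪ Fin n) : Set (Sym2 (Fin n)) :=
  {e | ∃ u v : Fin 4, u ≠ v ∧ e = s(f u, f v)}

/-- An abstract 2-rigidity matroid on the edge set of `K_n`: its ground set
consists of all non-loop edges, it has rank `2n - 3`, and every copy of `K₄`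
is a circuit. -/
def Rigidity2Matroid {n : ℕ} (M : Matroid (Sym2 (Fin n))) : Prop :=
  M.E = {e : Sym2 (Fin n) | ¬ e.IsDiag} ∧ RankEq M (2 * n - 3) ∧
    ∀ f : Fin 4 ↪ Fin n, IsCircuitIn M (K4Copy f)

/-- A matroidal 2-rigidity family: a sequence of graph matroids of rank
`2n - 3`, symmetric and hereditary in the sense that independence is
preserved under any injection of the vertex set. -/
structure RigFamily where
  M : (n : ℕ) → Matroid (Sym2 (Fin n))
  ground : ∀ n : ℕ, (M n).E = {e : Sym2 (Fin n) | ¬ e.IsDiag}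
  rank : ∀ n : ℕ, 2 ≤ n → RankEq (M n) (2 * n - 3)
  hered : ∀ {n m : ℕ} (f : Fin n ↪ Fin m) (G : Set (Sym2 (Fin n))),
    (M n).Indep G ↔ (M m).Indep (Sym2.map (⇑f) '' G)

/-- The 0-extension property: attaching a new vertex by at most two edges to
an independent graph keeps it independent. -/
def ZeroExt (F : RigFamily) : Prop :=
  ∀ (n : ℕ) (G : Set (Sym2 (Fin n))) (v a b : Fin n),
    v ∉ vertsOf G → v ≠ a → v ≠ b →
    (F.M n).Indep G → (F.M n).Indep (G ∪ {s(v, a), s(v, b)})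

/-- Adjacency in a graph given as a set of edges. -/
def EAdj {α : Type*} (G : Set (Sym2 α)) (a b : α) : Prop := a ≠ b ∧ s(a, b) ∈ G

/-- Connectivity of a graph given as a set of edges: any two of its vertices
are joined by a walk. -/
def EConnected {α : Type*} (G : Set (Sym2 α)) : Prop :=
  ∀ u ∈ vertsOf G, ∀ w ∈ vertsOf G, Relation.ReflTransGen (EAdj G) u w


open Set

variable {α : Type*}

section Vertices

variable {J : Set (Sym2 α)} {v a u w : α}

lemma mem_vertsOf_insert :
    v ∈ vertsOf (insert s(u, w) J) ↔ v = u ∨ v = w ∨ v ∈ vertsOf J := by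
  simp [vertsOf, or_assoc]

lemma mem_vertsOf_union_pair :
    v ∈ vertsOf (J ∪ {s(a, u), s(a, w)}) ↔ v ∈ vertsOf J ∨ v = a ∨ v = u ∨ v = w := by
  simp only [vertsOf, mem_ofPred_eq, mem_union, mem_insert_iff, mem_singleton_iff]
  grind

end Vertices

def completeEdges (U : Finset α) : Set (Sym2 α) := {e | ¬ e.IsDiag ∧ ∀ v ∈ e, v ∈ U}

def fanEdges (S : Finset α) (u w : α) : Set (Sym2 α) := ⋃ v ∈ S, {s(v, u), s(v, w)}

section Fan

variable {S : Finset α} {u w : α} {x : Sym2 α} {J : Set (Sym2 α)}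

lemma mem_fanEdges : x ∈ fanEdges S u w ↔ ∃ v ∈ S, x = s(v, u) ∨ x = s(v, w) := by
  simp [fanEdges]

lemma fanEdges_insert [DecidableEq α] (a : α) (S : Finset α) (u w : α) :
    fanEdges (insert a S) u w = {s(a, u), s(a, w)} ∪ fanEdges S u w := by
  simp [fanEdges]

lemma finite_fanEdges (S : Finset α) (u w : α) : (fanEdges S u w).Finite :=
  S.finite_toSet.biUnion fun _ _ => toFinite _

lemma mem_of_mem_fanEdges {v : α} (hx : x ∈ fanEdges S u w) (hv : v ∈ x) :
    v ∈ S ∨ v = u ∨ v = w := by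
  obtain ⟨a, ha, rfl | rfl⟩ := mem_fanEdges.1 hx <;> simp at hv <;> grind

lemma notMem_fanEdges (hS : ∀ v ∈ S, v ∉ vertsOf J) (hx : x ∈ J) :
    x ∉ fanEdges S u w := by
  intro h
  obtain ⟨v, hv, rfl | rfl⟩ := mem_fanEdges.1 h <;>
    exact hS v hv ⟨_, hx, Sym2.mem_mk_left _ _⟩

lemma ncard_fanEdges (huw : u ≠ w) (hu : u ∉ S) (hw : w ∉ S) :
    (fanEdges S u w).ncard = 2 * S.card := by
  classical
  induction S using Finset.induction_on with
  | empty => simp [fanEdges]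
  | @insert a S haS ih =>
    rw [Finset.mem_insert, not_or] at hu hw
    have hdisj : Disjoint {s(a, u), s(a, w)} (fanEdges S u w) := by
      refine disjoint_left.2 fun x hx hxS => ?_
      rcases hx with rfl | rfl <;>
        rcases mem_of_mem_fanEdges hxS (Sym2.mem_mk_left _ _) with h | h | h <;> grind
    rw [fanEdges_insert, ncard_union_eq hdisj (toFinite _) (finite_fanEdges _ _ _),
      ncard_pair (by simp [huw, hu.1]), ih hu.2 hw.2, Finset.card_insert_of_notMem haS]
    ring

end Fan

section Complete

variable [DecidableEq α] {S : Finset α} {u w : α}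

lemma eq_of_mem_completeEdges_pair {x : Sym2 α} (hx : x ∈ completeEdges {u, w}) :
    x = s(u, w) := by
  induction x using Sym2.ind with
  | _ a b =>
    simp only [completeEdges, Sym2.mk_isDiag_iff, Finset.mem_insert, Finset.mem_singleton,
      mem_ofPred_eq, Sym2.mem_iff, forall_eq_or_imp, forall_eq] at hx
    grind

lemma insert_fanEdges_subset_completeEdges (huw : u ≠ w) (hu : u ∉ S) (hw : w ∉ S) :
    insert s(u, w) (fanEdges S u w) ⊆ completeEdges (S ∪ {u, w}) := by
  rintro x (rfl | hx)
  · simp [completeEdges, huw]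
  · obtain ⟨v, hv, rfl | rfl⟩ := mem_fanEdges.1 hx <;>
      simp [completeEdges, hv] <;> grind

lemma ncard_insert_fanEdges (huw : u ≠ w) (hu : u ∉ S) (hw : w ∉ S) :
    (insert s(u, w) (fanEdges S u w)).ncard = 2 * (S ∪ {u, w}).card - 3 := by
  have huwS : s(u, w) ∉ fanEdges S u w := fun h => by
    obtain ⟨v, hv, h | h⟩ := mem_fanEdges.1 h <;> rw [Sym2.eq_iff] at h <;> grind
  rw [ncard_insert_of_notMem huwS (finite_fanEdges _ _ _), ncard_fanEdges huw hu hw,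
    Finset.card_union_of_disjoint (by simp [hu, hw]), Finset.card_pair huw]
  omega

end Complete

lemma isCircuitIn_iff_isCircuit {β : Type*} {M : Matroid β} {C : Set β} :
    IsCircuitIn M C ↔ M.IsCircuit C :=
  Matroid.isCircuit_iff_forall_ssubset.symm

namespace Matroid

section Circuits

variable {β : Type*} {M : Matroid β} {G X Y : Set β} {e : β}

lemma IsCircuit.indep_of_union_eq (hG : M.IsCircuit G) (hXY : X ∪ Y = G) (hdisj : Disjoint X Y)
    (hY : Y.Nonempty) : M.Indep X := by
  subst hXY
  obtain ⟨y, hy⟩ := hY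
  exact hG.ssubset_indep ((ssubset_iff_of_subset subset_union_left).2
    ⟨y, Or.inr hy, disjoint_right.1 hdisj hy⟩)

lemma IsCircuit.indep_insert_of_mem (hG : M.IsCircuit G) (hXY : X ∪ Y = G) (hdisj : Disjoint X Y)
    (hX : 1 < X.ncard) (he : e ∈ X) : M.Indep (insert e Y) := by
  subst hXY
  obtain ⟨x, hx, hxe⟩ := exists_ne_of_one_lt_ncard hX e
  refine (hG.sdiff_singleton_indep (Or.inl hx)).subset (insert_subset ?_ fun y hy => ?_)
  · exact ⟨Or.inl he, hxe.symm⟩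
  · exact ⟨Or.inr hy, fun h => disjoint_left.1 hdisj hx (h ▸ hy)⟩

lemma IsCircuit.isCircuit_insert_of_dep (hG : M.IsCircuit G) (hXY : X ∪ Y = G)
    (hdisj : Disjoint X Y) (he : M.IsNonloop e) (heG : e ∉ G) (hXe : M.Dep (insert e X))
    (hYe : M.Dep (insert e Y)) : M.IsCircuit (insert e X) := by
  subst hXY
  have hne : ∀ {Z : Set β}, M.Dep (insert e Z) → Z.Nonempty := fun hZ =>
    nonempty_iff_ne_empty.2 fun h => hZ.not_indep (by simpa [h] using he)
  have hX := hG.indep_of_union_eq rfl hdisj (hne hYe)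
  have hY := hG.indep_of_union_eq (union_comm Y X) hdisj.symm (hne hXe)
  have heX : e ∉ X := fun h => heG (Or.inl h)
  have heY : e ∉ Y := fun h => heG (Or.inr h)
  set CX := M.fundCircuit e X
  set CY := M.fundCircuit e Y
  have hCX : M.IsCircuit CX := hX.fundCircuit_isCircuit (hX.insert_dep_iff.1 hXe).1 heX
  have hCY : M.IsCircuit CY := hY.fundCircuit_isCircuit (hY.insert_dep_iff.1 hYe).1 heY
  have hCXs : CX ⊆ insert e X := M.fundCircuit_subset_insert e X
  have hCYs : CY ⊆ insert e Y := M.fundCircuit_subset_insert e Y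
  have hCXY : CX ≠ CY := by
    intro h
    refine hCX.not_indep (he.indep.subset fun x hx => ?_)
    have hxY := hCYs (h ▸ hx)
    rcases hCXs hx with rfl | hxX
    · rfl
    · exact absurd (hxY.resolve_left fun h => heX (h ▸ hxX)) (disjoint_left.1 hdisj hxX)
  obtain ⟨C, hCsub, hC⟩ := hCX.elimination hCY hCXY e
  have hCG : C = X ∪ Y := hC.eq_of_subset_isCircuit hG fun x hx => by
    obtain ⟨hx | hx, hxe⟩ := hCsub hx
    · exact Or.inl ((hCXs hx).resolve_left hxe)
    · exact Or.inr ((hCYs hx).resolve_left hxe)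
  refine (hCXs.antisymm (insert_subset (M.mem_fundCircuit e X) fun x hx => ?_)) ▸ hCX
  obtain ⟨hxC | hxC, -⟩ := hCsub (hCG ▸ Or.inl hx : x ∈ C)
  · exact hxC
  · rcases hCYs hxC with rfl | hxY
    · exact absurd hx heX
    · exact absurd hxY (disjoint_left.1 hdisj hx)

end Circuits

variable {M : Matroid (Sym2 α)}

def HasZeroExtension (M : Matroid (Sym2 α)) : Prop :=
  ∀ (G : Set (Sym2 α)) (v a b : α), v ∉ vertsOf G → v ≠ a → v ≠ b →
    M.Indep G → M.Indep (G ∪ {s(v, a), s(v, b)})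

def HasCompleteRank (M : Matroid (Sym2 α)) : Prop :=
  ∀ U : Finset α, 2 ≤ U.card → ∀ I : Set (Sym2 α),
    M.IsBasis I (completeEdges U) → I.ncard = 2 * U.card - 3

lemma HasZeroExtension.indep_union_fanEdges (hM : M.HasZeroExtension)
    {S : Finset α} {u w : α} {J : Set (Sym2 α)} (hJ : M.Indep J)
    (hS : ∀ v ∈ S, v ∉ vertsOf J ∧ v ≠ u ∧ v ≠ w) :
    M.Indep (J ∪ fanEdges S u w) := by
  classical
  induction S using Finset.induction_on generalizing J with
  | empty => simpa [fanEdges] using hJ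
  | @insert a S haS ih =>
    obtain ⟨haJ, hau, haw⟩ := hS a (Finset.mem_insert_self a S)
    rw [fanEdges_insert, ← union_assoc]
    refine ih (hM J a u w haJ hau haw hJ) fun v hv => ?_
    obtain ⟨hvJ, hvu, hvw⟩ := hS v (Finset.mem_insert_of_mem hv)
    have hva : v ≠ a := ne_of_mem_of_not_mem hv haS
    exact ⟨by rw [mem_vertsOf_union_pair]; tauto, hvu, hvw⟩

lemma HasCompleteRank.subset_closure_of_indep (hM : M.HasCompleteRank)
    (hE : M.E = {e | ¬ e.IsDiag}) {U : Finset α} {I : Set (Sym2 α)} (hU : 2 ≤ U.card)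
    (hI : M.Indep I) (hIU : I ⊆ completeEdges U) (hcard : 2 * U.card - 3 ≤ I.ncard) :
    completeEdges U ⊆ M.closure I := by
  obtain ⟨B, hB, hIB⟩ := hI.subset_isBasis_of_subset hIU (by rw [hE]; exact fun e he => he.1)
  have hBcard := hM U hU B hB
  rw [eq_of_subset_of_ncard_le hIB (by omega) (finite_of_ncard_pos (by omega))]
  exact hB.subset_closure

lemma HasCompleteRank.isNonloop (hM : M.HasCompleteRank) (hE : M.E = {e | ¬ e.IsDiag})
    {u w : α} (huw : u ≠ w) : M.IsNonloop s(u, w) := by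
  classical
  have hU : ({u, w} : Finset α).card = 2 := Finset.card_pair huw
  obtain ⟨B, hB⟩ := M.exists_isBasis (completeEdges {u, w}) (by rw [hE]; exact fun e he => he.1)
  obtain ⟨e, rfl⟩ := ncard_eq_one.1 (by simpa [hU] using hM {u, w} hU.ge B hB)
  rw [← eq_of_mem_completeEdges_pair (hB.subset rfl)]
  exact indep_singleton.1 hB.indep

lemma HasCompleteRank.completeEdges_subset_closure_fanEdges [DecidableEq α]
    (hM : M.HasCompleteRank) (hE : M.E = {e | ¬ e.IsDiag}) {S : Finset α} {u w : α}
    (huw : u ≠ w) (hu : u ∉ S) (hw : w ∉ S)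
    (hind : M.Indep (insert s(u, w) (fanEdges S u w))) :
    completeEdges (S ∪ {u, w}) ⊆ M.closure (insert s(u, w) (fanEdges S u w)) :=
  hM.subset_closure_of_indep hE
    ((Finset.card_pair huw).ge.trans (Finset.card_le_card Finset.subset_union_right)) hind
    (insert_fanEdges_subset_completeEdges huw hu hw) (ncard_insert_fanEdges huw hu hw).ge

theorem HasZeroExtension.dep_insert_of_separation [Finite α]
    (hzero : M.HasZeroExtension) (hrank : M.HasCompleteRank) (hE : M.E = {e | ¬ e.IsDiag})
    {G X Y : Set (Sym2 α)} {u w : α} {f : Sym2 α} (hG : M.IsCircuit G) (huw : u ≠ w)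
    (hXY : X ∪ Y = G) (hmeet : vertsOf X ∩ vertsOf Y ⊆ {u, w}) (hfY : f ∈ Y)
    (hf : f ≠ s(u, w)) : M.Dep (insert s(u, w) Y) := by
  classical
  subst hXY
  have hYE : insert s(u, w) Y ⊆ M.E :=
    insert_subset (by rw [hE]; simpa using huw) (subset_union_right.trans hG.subset_ground)
  refine (not_indep_iff hYE).1 fun hind => ?_
  set S : Finset α := (toFinite (vertsOf X \ {u, w})).toFinset with hSdef
  have hS : ∀ v ∈ S, v ∉ vertsOf (insert s(u, w) Y) ∧ v ≠ u ∧ v ≠ w := by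
    intro v hv
    simp only [hSdef, Finite.mem_toFinset, mem_sdiff, mem_insert_iff, mem_singleton_iff,
      not_or] at hv
    refine ⟨?_, hv.2⟩
    rw [mem_vertsOf_insert]
    have := fun hvY => hmeet ⟨hv.1, hvY⟩
    simp only [mem_insert_iff, mem_singleton_iff] at this
    tauto
  set F := fanEdges S u w
  set K := insert s(u, w) Y ∪ F
  have hK : M.Indep K := hzero.indep_union_fanEdges hind hS
  have hfK : f ∈ K := Or.inl (Or.inr hfY)
  have hfF : f ∉ F := notMem_fanEdges (fun v hv => (hS v hv).1) (Or.inr hfY)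
  have hbase : insert s(u, w) F ⊆ K \ {f} :=
    insert_subset ⟨Or.inl (Or.inl rfl), hf.symm⟩
      fun x hx => ⟨Or.inr hx, fun h => hfF (h ▸ hx)⟩
  have hXU : X ⊆ completeEdges (S ∪ {u, w}) := fun x hx => by
    refine ⟨?_, fun v hv => ?_⟩
    · simpa [hE] using hG.subset_ground (Or.inl hx)
    · by_cases hvuw : v = u ∨ v = w
      · rcases hvuw with rfl | rfl <;> simp
      · simp only [Finset.mem_union, hSdef, Finite.mem_toFinset]
        exact Or.inl ⟨⟨x, hx, hv⟩, by simpa using hvuw⟩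
  have hX : X ⊆ M.closure (K \ {f}) := calc
    X ⊆ completeEdges (S ∪ {u, w}) := hXU
    _ ⊆ M.closure (insert s(u, w) F) :=
      hrank.completeEdges_subset_closure_fanEdges hE huw (by simp [hSdef]) (by simp [hSdef])
        (hK.subset (hbase.trans sdiff_subset))
    _ ⊆ M.closure (K \ {f}) := M.closure_subset_closure hbase
  have hGf : (X ∪ Y) \ {f} ⊆ M.closure (K \ {f}) := by
    rintro x ⟨hx | hx, hxf⟩
    · exact hX hx
    · exact M.subset_closure _ (sdiff_subset.trans hK.subset_ground) ⟨Or.inl (Or.inr hx), hxf⟩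
  exact hK.notMem_closure_sdiff_of_mem hfK (M.closure_subset_closure_of_subset_closure hGf
    (hG.mem_closure_sdiff_singleton_of_mem (Or.inr hfY)))

end Matroid

/-- The 2-separation lemma: if a circuit `G` of an abstract 2-rigidity
matroid (with the 0-extension property and local ranks `2|U| - 3` on
complete graphs) is partitioned into edge sets `X`, `Y` with at least two
edges each, meeting only in the two vertices `u, w`, then `{u,w}` is not an
edge of `G` and both `X + uw` and `Y + uw` are circuits. -/
theorem stmt14 (n : ℕ) (M : Matroid (Sym2 (Fin n))) (hM : Rigidity2Matroid M)
    (hloc : ∀ U : Finset (Fin n), 2 ≤ U.card →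
      ∀ I : Set (Sym2 (Fin n)),
        M.IsBasis I {e : Sym2 (Fin n) | ¬ e.IsDiag ∧ ∀ v ∈ e, v ∈ U} →
        I.ncard = 2 * U.card - 3)
    (hzero : ∀ (G : Set (Sym2 (Fin n))) (v a b : Fin n),
      v ∉ vertsOf G → v ≠ a → v ≠ b →
      M.Indep G → M.Indep (G ∪ {s(v, a), s(v, b)}))
    (G : Set (Sym2 (Fin n))) (hG : IsCircuitIn M G)
    (u w : Fin n) (huw : u ≠ w) (X Y : Set (Sym2 (Fin n)))
    (hXY : X ∪ Y = G) (hdisj : Disjoint X Y)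
    (hX2 : 2 ≤ X.ncard) (hY2 : 2 ≤ Y.ncard)
    (hmeet : vertsOf X ∩ vertsOf Y = {u, w}) :
    s(u, w) ∉ G ∧ IsCircuitIn M (X ∪ {s(u, w)}) ∧
      IsCircuitIn M (Y ∪ {s(u, w)}) := by
  have hzero : M.HasZeroExtension := hzero
  have hrank : M.HasCompleteRank := hloc
  rw [isCircuitIn_iff_isCircuit] at hG
  have hYX : Y ∪ X = G := (union_comm Y X).trans hXY
  obtain ⟨f, hfY, hf⟩ := exists_ne_of_one_lt_ncard hY2 s(u, w)
  obtain ⟨g, hgX, hg⟩ := exists_ne_of_one_lt_ncard hX2 s(u, w)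
  have hdepY := hzero.dep_insert_of_separation hrank hM.1 hG huw hXY hmeet.subset hfY hf
  have hdepX := hzero.dep_insert_of_separation hrank hM.1 hG huw hYX
    (inter_comm (vertsOf X) _ ▸ hmeet).subset hgX hg
  have huwG : s(u, w) ∉ G := by
    rw [← hXY]
    rintro (h | h)
    · exact hdepY.not_indep (hG.indep_insert_of_mem hXY hdisj hX2 h)
    · exact hdepX.not_indep (hG.indep_insert_of_mem hYX hdisj.symm hY2 h)
  have hnl := hrank.isNonloop hM.1 huw
  simp only [union_singleton, isCircuitIn_iff_isCircuit]
  exact ⟨huwG, hG.isCircuit_insert_of_dep hXY hdisj hnl huwG hdepX hdepY,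
    hG.isCircuit_insert_of_dep hYX hdisj.symm hnl huwG hdepY hdepX⟩
end
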